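/- Let α > 1, 1 < δ ≤ 2 and a > 1/(δ−1), and let f_Z:[0,1)→ℝ be the density of the power logarithmic linked exposure example, f_Z(z) = ((a+1)/α) · (1 − z/α)^{δ−2} / (a + (1 − z/α)^δ)² · ( a(δ−1) − (1 − z/α)^δ ). Then its derivative f_Z'(z) = −((a+1)/α²) · [ a²(δ−1)(δ−2) − a(δ−1)(δ+4)(1 − z/α)^δ + 2(1 − z/α)^{2δ} ] / ( (a + (1 − z/α)^δ)³ (1 − z/α)^{3−δ} ) has no zero in (0,1); in particular the density f_Z has no interior critical point on [0,1) and hence cannot be unimodal, so unimodality of the power logarithmic linked exposure density requires δ > 2. -/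

import Mathlib

/-!
Put `u = 1 - z/α ∈ (0,1)` and `S = u^δ ∈ (0,1)`. The numerator of `f_Z'` is then the quadratic
`a²(δ-1)(δ-2) - a(δ-1)(δ+4) S + 2 S²` in `S`. Its constant term is `≤ 0` because `δ ≤ 2`, and
`a(δ-1) > 1` gives `a(δ-1)(δ+4) > 5 > 2S`, so the rest `S (2S - a(δ-1)(δ+4))` is negative.
Hence `f_Z' > 0` on `(0,1)`: the density is strictly increasing there.
-/

open Real Set

lemma one_sub_div_mem_Ioo {α z : ℝ} (hz : z ∈ Ioo 0 α) : 1 - z / α ∈ Ioo 0 1 := by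
  have hα : 0 < α := hz.1.trans hz.2
  constructor
  · linarith [(div_lt_one hα).mpr hz.2]
  · linarith [div_pos hz.1 hα]

lemma hasDerivAt_one_sub_div_rpow {α p z : ℝ} (hu : 1 - z / α ≠ 0) :
    HasDerivAt (fun z => (1 - z / α) ^ p) (-(p / α) * (1 - z / α) ^ (p - 1)) z := by
  have hlin : HasDerivAt (fun z : ℝ => 1 - z / α) (-(1 / α)) z := by
    simpa using ((hasDerivAt_id z).div_const α).const_sub 1
  exact (hlin.rpow_const (Or.inl hu)).congr_deriv (by ring)

lemma hasDerivAt_density {α δ a z : ℝ} (hα : α ≠ 0) (ha : 0 ≤ a) (hu : 0 < 1 - z / α) :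
    HasDerivAt (fun z => (a + 1) / α * ((1 - z / α) ^ (δ - 2) / (a + (1 - z / α) ^ δ) ^ 2) *
        (a * (δ - 1) - (1 - z / α) ^ δ))
      (-((a + 1) / α ^ 2) *
        ((a ^ 2 * (δ - 1) * (δ - 2) - a * (δ - 1) * (δ + 4) * (1 - z / α) ^ δ +
            2 * (1 - z / α) ^ (2 * δ)) /
          ((a + (1 - z / α) ^ δ) ^ 3 * (1 - z / α) ^ (3 - δ)))) z := by
  have hp := hasDerivAt_one_sub_div_rpow (p := δ - 2) hu.ne'
  have hq := hasDerivAt_one_sub_div_rpow (p := δ) hu.ne'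
  have hden : HasDerivAt (fun z => (a + (1 - z / α) ^ δ) ^ 2)
      (2 * (a + (1 - z / α) ^ δ) * (-(δ / α) * (1 - z / α) ^ (δ - 1))) z := by
    simpa using (hq.const_add a).fun_pow 2
  have hS : 0 < (1 - z / α) ^ δ := rpow_pos_of_pos hu δ
  refine (((hp.fun_div hden (by positivity)).const_mul ((a + 1) / α)).mul
    (hq.const_sub (a * (δ - 1)))).congr_deriv ?_
  generalize 1 - z / α = u at hu hS ⊢
  -- every power of `u` becomes `u ^ δ` times an integer power, turning the identity into a rational one
  rw [show δ - 2 - 1 = δ - (3 : ℕ) by push_cast; ring, show δ - 2 = δ - (2 : ℕ) by push_cast; ring,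
    show 3 - δ = -(δ - (3 : ℕ)) by push_cast; ring, rpow_neg hu.le, rpow_sub_natCast hu.ne',
    rpow_sub_natCast hu.ne', rpow_sub_one hu.ne', mul_comm 2 δ, rpow_mul hu.le, rpow_two]
  field_simp
  ring

lemma density_numerator_neg {δ a S : ℝ} (hδ1 : 1 < δ) (hδ2 : δ ≤ 2) (haδ : 1 < a * (δ - 1))
    (hS0 : 0 < S) (hS1 : S ≤ 1) :
    a ^ 2 * (δ - 1) * (δ - 2) - a * (δ - 1) * (δ + 4) * S + 2 * S ^ 2 < 0 := by
  have hconst : a ^ 2 * (δ - 1) * (δ - 2) ≤ 0 :=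
    mul_nonpos_of_nonneg_of_nonpos (by positivity) (by linarith)
  have hlin : 2 * S < a * (δ - 1) * (δ + 4) := by nlinarith
  nlinarith

lemma density_deriv_pos {α δ a u : ℝ} (hα : α ≠ 0) (hδ1 : 1 < δ) (hδ2 : δ ≤ 2)
    (ha : 1 / (δ - 1) < a) (hu : u ∈ Ioo 0 1) :
    0 < -((a + 1) / α ^ 2) *
      ((a ^ 2 * (δ - 1) * (δ - 2) - a * (δ - 1) * (δ + 4) * u ^ δ + 2 * u ^ (2 * δ)) /
        ((a + u ^ δ) ^ 3 * u ^ (3 - δ))) := by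
  have haδ : 1 < a * (δ - 1) := by rwa [div_lt_iff₀ (by linarith)] at ha
  have ha0 : 0 < a := lt_trans (by positivity) ha
  have hS0 : 0 < u ^ δ := rpow_pos_of_pos hu.1 δ
  have hS1 : u ^ δ ≤ 1 := rpow_le_one hu.1.le hu.2.le (by linarith)
  rw [mul_comm 2 δ, rpow_mul hu.1.le, rpow_two, neg_mul,
    ← mul_neg, ← neg_div]
  have hN := density_numerator_neg hδ1 hδ2 haδ hS0 hS1
  have hD : 0 < (a + u ^ δ) ^ 3 * u ^ (3 - δ) := by
    have := rpow_pos_of_pos hu.1 (3 - δ)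
    positivity
  exact mul_pos (by positivity) (div_pos (by linarith) hD)

/-- For `α > 1`, `1 < δ ≤ 2` and `a > 1/(δ-1)`, the density of the power
logarithmic linked exposure example,
`f_Z z = ((a+1)/α) (1-z/α)^(δ-2)/(a+(1-z/α)^δ)² (a(δ-1) - (1-z/α)^δ)`,
has derivative
`f_Z' z = -((a+1)/α²)(a²(δ-1)(δ-2) - a(δ-1)(δ+4)(1-z/α)^δ + 2(1-z/α)^(2δ)) / ((a+(1-z/α)^δ)³ (1-z/α)^(3-δ))`,
which has no zero in `(0,1)`; in particular the density has no interior critical point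
on `[0,1)` (hence cannot be unimodal, so unimodality requires `δ > 2`). -/
theorem statement15 (α δ a : ℝ) (hα : 1 < α) (hδ1 : 1 < δ) (hδ2 : δ ≤ 2)
    (ha : 1 / (δ - 1) < a) :
    let f : ℝ → ℝ := fun z =>
      (a + 1) / α * ((1 - z / α) ^ (δ - 2) / (a + (1 - z / α) ^ δ) ^ 2) *
        (a * (δ - 1) - (1 - z / α) ^ δ)
    let fd : ℝ → ℝ := fun z =>
      -((a + 1) / α ^ 2) *
        ((a ^ 2 * (δ - 1) * (δ - 2) - a * (δ - 1) * (δ + 4) * (1 - z / α) ^ δ +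
            2 * (1 - z / α) ^ (2 * δ)) /
          ((a + (1 - z / α) ^ δ) ^ 3 * (1 - z / α) ^ (3 - δ)))
    (∀ z ∈ Set.Ioo (0:ℝ) 1, HasDerivAt f (fd z) z ∧ fd z ≠ 0) ∧
    (∀ z ∈ Set.Ioo (0:ℝ) 1, ¬ HasDerivAt f 0 z) := by
  intro f fd
  have hα0 : α ≠ 0 := by linarith
  have ha0 : 0 ≤ a := (lt_trans (by positivity) ha).le
  have key : ∀ z ∈ Ioo (0:ℝ) 1, HasDerivAt f (fd z) z ∧ fd z ≠ 0 := fun z hz =>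
    have hu := one_sub_div_mem_Ioo ⟨hz.1, hz.2.trans hα⟩
    ⟨hasDerivAt_density hα0 ha0 hu.1, (density_deriv_pos hα0 hδ1 hδ2 ha hu).ne'⟩
  exact ⟨key, fun z hz h0 => (key z hz).2 (h0.unique (key z hz).1).symm⟩
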